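/- arXiv:2004.08080 — 2 statements merged into one kernel-verified Lean document; each statement's English description precedes it below -/
import Mathlib

section
/- For a connected graph G with degrees d_i, ABC matrix M, and the vector x = (√d_1, ..., √d_n), for every vertex v_i one has (Mx)_i ≤ √(d_i² − 2d_i + Σ_{v_j ∼ v_i} d_j), where the sum is over neighbors of v_i. -/
open scoped Classical
open Finset Matrix

noncomputable def ABCMatrix {n : ℕ} (G : SimpleGraph (Fin n)) : Matrix (Fin n) (Fin n) ℝ :=
  fun i j => if G.Adj i j then
    Real.sqrt (((G.degree i : ℝ) + (G.degree j : ℝ) - 2) / ((G.degree i : ℝ) * (G.degree j : ℝ)))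
  else 0

noncomputable def rhoABC {n : ℕ} (G : SimpleGraph (Fin n)) : ℝ :=
  sSup {r : ℝ | ∃ x : Fin n → ℝ, ∑ i, x i ^ 2 = 1 ∧ r = x ⬝ᵥ (ABCMatrix G).mulVec x}

/-! Each term of `(Mx)_i` simplifies to `√((d_i + d_j - 2)/d_i)`; Cauchy–Schwarz against the
all-ones vector on the `d_i` neighbours bounds the sum by `√(d_i · Σ_{j ∼ i} (d_i + d_j - 2)/d_i)`. -/

theorem Real.sum_sqrt_le_sqrt_card_mul_sum {ι : Type*} {s : Finset ι} {f : ι → ℝ}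
    (hf : ∀ i ∈ s, 0 ≤ f i) : ∑ i ∈ s, √(f i) ≤ √(#s * ∑ i ∈ s, f i) := by
  apply Real.le_sqrt_of_sq_le
  calc (∑ i ∈ s, √(f i)) ^ 2 ≤ #s * ∑ i ∈ s, √(f i) ^ 2 := sq_sum_le_card_mul_sum_sq
    _ = #s * ∑ i ∈ s, f i := by
      congr 1
      exact sum_congr rfl fun i hi => Real.sq_sqrt (hf i hi)

namespace SimpleGraph

variable {V : Type*} [Fintype V] {G : SimpleGraph V} [DecidableRel G.Adj]

theorem one_le_degree_of_adj {v w : V} (h : G.Adj v w) : (1 : ℝ) ≤ G.degree v := by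
  exact_mod_cast (G.degree_pos_iff_exists_adj v).mpr ⟨w, h⟩

theorem degree_mul_sum_neighborFinset (v : V) :
    (G.degree v : ℝ) *
        ∑ w ∈ G.neighborFinset v, (((G.degree v : ℝ) + G.degree w - 2) / G.degree v) =
      (G.degree v : ℝ) ^ 2 - 2 * G.degree v + ∑ w ∈ G.neighborFinset v, (G.degree w : ℝ) := by
  rw [mul_sum]
  have hcancel : ∀ w ∈ G.neighborFinset v, (G.degree v : ℝ) *
      (((G.degree v : ℝ) + G.degree w - 2) / G.degree v) = G.degree v + G.degree w - 2 :=
    fun w hw => mul_div_cancel₀ _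
      (zero_lt_one.trans_le (one_le_degree_of_adj ((G.mem_neighborFinset v w).mp hw))).ne'
  rw [sum_congr rfl hcancel, sum_sub_distrib, sum_add_distrib, sum_const, sum_const,
    card_neighborFinset_eq_degree, nsmul_eq_mul, nsmul_eq_mul]
  ring

end SimpleGraph

open SimpleGraph in
theorem ABCMatrix_mulVec_sqrt_degree {n : ℕ} (G : SimpleGraph (Fin n)) (i : Fin n) :
    (ABCMatrix G).mulVec (fun j => √(G.degree j)) i =
      ∑ j ∈ G.neighborFinset i, √(((G.degree i : ℝ) + G.degree j - 2) / G.degree i) := by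
  rw [mulVec, dotProduct, neighborFinset_eq_filter, sum_filter]
  refine sum_congr rfl fun j _ => ?_
  by_cases hij : G.Adj i j
  · have hj : (G.degree j : ℝ) ≠ 0 := (zero_lt_one.trans_le (one_le_degree_of_adj hij.symm)).ne'
    rw [ABCMatrix, if_pos hij, if_pos hij, ← Real.sqrt_mul' _ (Nat.cast_nonneg _)]
    field_simp
  · simp [ABCMatrix, hij]

theorem stmt2_general {n : ℕ} (G : SimpleGraph (Fin n)) (i : Fin n) :
    (ABCMatrix G).mulVec (fun j => Real.sqrt (G.degree j)) i ≤
      Real.sqrt ((G.degree i : ℝ) ^ 2 - 2 * (G.degree i : ℝ) +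
        ∑ j ∈ G.neighborFinset i, (G.degree j : ℝ)) := by
  have hnonneg : ∀ j ∈ G.neighborFinset i,
      0 ≤ ((G.degree i : ℝ) + G.degree j - 2) / G.degree i := fun j hj => by
    have hij := (G.mem_neighborFinset i j).mp hj
    exact div_nonneg (by linarith [SimpleGraph.one_le_degree_of_adj hij,
      SimpleGraph.one_le_degree_of_adj hij.symm]) (Nat.cast_nonneg _)
  calc (ABCMatrix G).mulVec (fun j => √(G.degree j)) i
      = ∑ j ∈ G.neighborFinset i, √(((G.degree i : ℝ) + G.degree j - 2) / G.degree i) :=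
        ABCMatrix_mulVec_sqrt_degree G i
    _ ≤ √(#(G.neighborFinset i) *
          ∑ j ∈ G.neighborFinset i, (((G.degree i : ℝ) + G.degree j - 2) / G.degree i)) :=
        Real.sum_sqrt_le_sqrt_card_mul_sum hnonneg
    _ = _ := by
      rw [SimpleGraph.card_neighborFinset_eq_degree, SimpleGraph.degree_mul_sum_neighborFinset]

theorem stmt2 {n : ℕ} (G : SimpleGraph (Fin n)) (hd : ∀ i, 1 ≤ G.degree i) (i : Fin n) :
    (ABCMatrix G).mulVec (fun j => Real.sqrt (G.degree j)) i ≤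
      Real.sqrt ((G.degree i : ℝ) ^ 2 - 2 * (G.degree i : ℝ) +
        ∑ j ∈ G.neighborFinset i, (G.degree j : ℝ)) :=
  stmt2_general G i
end

section
/- Let G be a connected graph with n vertices, m edges, and maximum degree Δ, and let k = ⌈(2m−n+1)/Δ⌉. Then ρ_ABC(G) ≤ √(Δ + k − 2). -/
open scoped Classical
open Finset Matrix

/-!
The quadratic form of a symmetric nonnegative matrix `M` is bounded by `C` on unit vectors as
soon as `M w ≤ C w` for some positive vector `w`. For the ABC matrix take `w = (√d_v)`: then
`(M w)_i = ∑_{j ∼ i} √(d_i + d_j - 2) / √d_i`, and by Cauchy–Schwarz it suffices to show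
`S_i + d_i² ≤ (Δ + k) d_i` for `S_i = ∑_{j ∼ i} d_j`. This follows from `S_i ≤ Δ d_i` and
`S_i ≤ 2m - n + 1 ≤ k Δ`, the latter because in a connected graph every vertex outside the
closed neighbourhood of `i` has degree at least one.
-/

lemma two_mul_mul_le_div_mul_sq_add_div_mul_sq (a b : ℝ) {p q : ℝ} (hp : 0 < p) (hq : 0 < q) :
    2 * (a * b) ≤ q / p * a ^ 2 + p / q * b ^ 2 := by
  have h : q / p * a ^ 2 + p / q * b ^ 2 - 2 * (a * b) = (q * a - p * b) ^ 2 / (p * q) := by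
    field_simp
    ring
  nlinarith [show 0 ≤ (q * a - p * b) ^ 2 / (p * q) by positivity]

theorem Matrix.dotProduct_mulVec_le_of_mulVec_le {ι : Type*} [Fintype ι] {M : Matrix ι ι ℝ}
    (hM : M.IsSymm) (hM₀ : ∀ i j, 0 ≤ M i j) {w : ι → ℝ} (hw : ∀ i, 0 < w i) {C : ℝ}
    (hMw : ∀ i, (M *ᵥ w) i ≤ C * w i) (x : ι → ℝ) :
    x ⬝ᵥ M *ᵥ x ≤ C * ∑ i, x i ^ 2 := by
  have hrow : ∑ i, ∑ j, M i j * (w j / w i * x i ^ 2) ≤ C * ∑ i, x i ^ 2 :=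
    calc ∑ i, ∑ j, M i j * (w j / w i * x i ^ 2) = ∑ i, x i ^ 2 / w i * (M *ᵥ w) i := by
          simp only [mulVec, dotProduct, mul_sum]
          exact sum_congr rfl fun i _ => sum_congr rfl fun j _ => by ring
      _ ≤ ∑ i, x i ^ 2 / w i * (C * w i) :=
          sum_le_sum fun i _ => mul_le_mul_of_nonneg_left (hMw i) (by have := hw i; positivity)
      _ = C * ∑ i, x i ^ 2 := by
          rw [mul_sum]
          exact sum_congr rfl fun i _ => by have := (hw i).ne'; field_simp
  have hswap : ∑ i, ∑ j, M i j * (w i / w j * x j ^ 2)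
      = ∑ i, ∑ j, M i j * (w j / w i * x i ^ 2) := by
    rw [sum_comm]
    simp only [hM.apply]
  have h2 : 2 * (x ⬝ᵥ M *ᵥ x) ≤ 2 * (C * ∑ i, x i ^ 2) :=
    calc 2 * (x ⬝ᵥ M *ᵥ x) = ∑ i, ∑ j, M i j * (2 * (x i * x j)) := by
          simp only [mulVec, dotProduct, mul_sum]
          exact sum_congr rfl fun i _ => sum_congr rfl fun j _ => by ring
      _ ≤ ∑ i, ∑ j, M i j * (w j / w i * x i ^ 2 + w i / w j * x j ^ 2) :=
          sum_le_sum fun i _ => sum_le_sum fun j _ => mul_le_mul_of_nonneg_left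
            (two_mul_mul_le_div_mul_sq_add_div_mul_sq _ _ (hw i) (hw j)) (hM₀ i j)
      _ = ∑ i, ∑ j, M i j * (w j / w i * x i ^ 2)
          + ∑ i, ∑ j, M i j * (w i / w j * x j ^ 2) := by
          simp only [mul_add, sum_add_distrib]
      _ ≤ 2 * (C * ∑ i, x i ^ 2) := by rw [hswap]; linarith
  linarith

lemma add_sq_le_add_mul_of_le_mul_of_le_mul {S d D c : ℝ} (hd : 0 ≤ d) (hdD : d ≤ D)
    (hSd : S ≤ D * d) (hSc : S ≤ c * D) : S + d ^ 2 ≤ (D + c) * d := by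
  rcases le_total d c with hdc | hcd
  · nlinarith
  · nlinarith [mul_nonneg (sub_nonneg.2 hcd) (sub_nonneg.2 hdD)]

namespace SimpleGraph

variable {V : Type*} [Fintype V] (G : SimpleGraph V) [DecidableRel G.Adj]

lemma sum_degree_neighborFinset_add_card_le (hdeg : ∀ v, 0 < G.degree v)
    (i : V) : ∑ j ∈ G.neighborFinset i, G.degree j + Fintype.card V ≤ 2 * #G.edgeFinset + 1 := by
  have hi : i ∉ G.neighborFinset i := by simp
  have hcard := card_sdiff_add_card_eq_card (subset_univ (insert i (G.neighborFinset i)))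
  rw [card_insert_of_notMem hi, card_neighborFinset_eq_degree, card_univ] at hcard
  have hrest : #(univ \ insert i (G.neighborFinset i))
      ≤ ∑ v ∈ univ \ insert i (G.neighborFinset i), G.degree v := by
    simpa using card_nsmul_le_sum _ (fun v => G.degree v) 1 fun v _ => hdeg v
  have hsum := sum_sdiff (subset_univ (insert i (G.neighborFinset i))) (f := fun v => G.degree v)
  rw [sum_insert hi, sum_degrees_eq_twice_card_edges] at hsum
  omega

lemma sum_sqrt_degree_add_degree_sub_two_le (hdeg : ∀ v, 0 < G.degree v)
    {c : ℝ} (hc : 2 * (#G.edgeFinset : ℝ) - Fintype.card V + 1 ≤ c * G.maxDegree) (i : V) :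
    ∑ j ∈ G.neighborFinset i, √((G.degree i : ℝ) + G.degree j - 2)
      ≤ √(G.maxDegree + c - 2) * G.degree i := by
  have hdeg₁ (v : V) : (1 : ℝ) ≤ G.degree v := by exact_mod_cast hdeg v
  have hdD : (G.degree i : ℝ) ≤ G.maxDegree := by exact_mod_cast G.degree_le_maxDegree i
  have hSd : ∑ j ∈ G.neighborFinset i, (G.degree j : ℝ) ≤ G.maxDegree * G.degree i :=
    calc ∑ j ∈ G.neighborFinset i, (G.degree j : ℝ) ≤ ∑ _j ∈ G.neighborFinset i, (G.maxDegree : ℝ) :=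
          sum_le_sum fun j _ => by exact_mod_cast G.degree_le_maxDegree j
      _ = G.maxDegree * G.degree i := by
          rw [sum_const, nsmul_eq_mul, card_neighborFinset_eq_degree, mul_comm]
  have hSc : ∑ j ∈ G.neighborFinset i, (G.degree j : ℝ) ≤ c * G.maxDegree := by
    have h := G.sum_degree_neighborFinset_add_card_le hdeg i
    have h' : ∑ j ∈ G.neighborFinset i, (G.degree j : ℝ) + Fintype.card V
        ≤ 2 * #G.edgeFinset + 1 := by exact_mod_cast h
    linarith
  have hsq : ∑ j ∈ G.neighborFinset i, √((G.degree i : ℝ) + G.degree j - 2) ^ 2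
      = ∑ j ∈ G.neighborFinset i, (G.degree j : ℝ) + G.degree i * (G.degree i - 2) := by
    rw [sum_congr rfl fun j _ => Real.sq_sqrt (by linarith [hdeg₁ i, hdeg₁ j])]
    simp only [sum_sub_distrib, sum_add_distrib, sum_const, nsmul_eq_mul,
      card_neighborFinset_eq_degree]
    ring
  have hkey := add_sq_le_add_mul_of_le_mul_of_le_mul (by linarith [hdeg₁ i]) hdD hSd hSc
  calc ∑ j ∈ G.neighborFinset i, √((G.degree i : ℝ) + G.degree j - 2)
      ≤ √((G.maxDegree + c - 2) * (G.degree i : ℝ) ^ 2) := by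
        refine Real.le_sqrt_of_sq_le (sq_sum_le_card_mul_sum_sq.trans ?_)
        rw [card_neighborFinset_eq_degree, hsq]
        nlinarith [hdeg₁ i]
    _ = √(G.maxDegree + c - 2) * G.degree i := by
        rw [Real.sqrt_mul' _ (sq_nonneg _), Real.sqrt_sq (Nat.cast_nonneg _)]

end SimpleGraph

lemma isSymm_ABCMatrix {n : ℕ} (G : SimpleGraph (Fin n)) : (ABCMatrix G).IsSymm := by
  ext i j
  simp only [transpose_apply, ABCMatrix, G.adj_comm, add_comm, mul_comm]

lemma ABCMatrix_nonneg {n : ℕ} (G : SimpleGraph (Fin n)) (i j : Fin n) : 0 ≤ ABCMatrix G i j := by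
  unfold ABCMatrix
  split_ifs <;> positivity

lemma ABCMatrix_mulVec_sqrt_degree_apply {n : ℕ} (G : SimpleGraph (Fin n)) (i : Fin n) :
    (ABCMatrix G *ᵥ fun j => √(G.degree j : ℝ)) i
      = (∑ j ∈ G.neighborFinset i, √((G.degree i : ℝ) + G.degree j - 2)) / √(G.degree i : ℝ) := by
  rw [sum_div, mulVec, dotProduct, ← sum_subset (subset_univ (G.neighborFinset i))]
  · refine sum_congr rfl fun j hj => ?_
    have hadj : G.Adj i j := (G.mem_neighborFinset i j).1 hj
    have hj₀ : (G.degree j : ℝ) ≠ 0 := by exact_mod_cast hadj.degree_pos_right.ne'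
    rw [ABCMatrix, if_pos hadj, ← Real.sqrt_mul' _ (Nat.cast_nonneg _),
      ← Real.sqrt_div' _ (Nat.cast_nonneg _)]
    congr 1
    field_simp
  · intro j _ hj
    simp [ABCMatrix, (G.mem_neighborFinset i j).not.1 hj]

theorem stmt6 {n : ℕ} (G : SimpleGraph (Fin n)) (hG : G.Connected) :
    rhoABC G ≤ Real.sqrt ((G.maxDegree : ℝ) +
      ((⌈(2 * (G.edgeFinset.card : ℝ) - (n : ℝ) + 1) / (G.maxDegree : ℝ)⌉ : ℤ) : ℝ) - 2) := by
  refine Real.sSup_le ?_ (Real.sqrt_nonneg _)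
  rintro _ ⟨x, hx, rfl⟩
  rcases subsingleton_or_nontrivial (Fin n) with hn | hn
  · have hM : ABCMatrix G = 0 := by
      ext i j
      simp [ABCMatrix, Subsingleton.elim i j]
    simp [hM]
  have hdeg (v : Fin n) : 0 < G.degree v := hG.preconnected.degree_pos_of_nontrivial v
  obtain ⟨v⟩ : Nonempty (Fin n) := inferInstance
  have hΔ : (0 : ℝ) < G.maxDegree := by
    exact_mod_cast (hdeg v).trans_le (G.degree_le_maxDegree v)
  have hc : 2 * (#G.edgeFinset : ℝ) - Fintype.card (Fin n) + 1
      ≤ ⌈(2 * (#G.edgeFinset : ℝ) - n + 1) / G.maxDegree⌉ * G.maxDegree := by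
    rw [Fintype.card_fin, ← div_le_iff₀ hΔ]
    exact Int.le_ceil _
  have hw (v : Fin n) : 0 < √(G.degree v : ℝ) := Real.sqrt_pos.2 (by exact_mod_cast hdeg v)
  have hrow (i : Fin n) : (ABCMatrix G *ᵥ fun j => √(G.degree j : ℝ)) i
      ≤ √(G.maxDegree + ⌈(2 * (#G.edgeFinset : ℝ) - n + 1) / G.maxDegree⌉ - 2)
        * √(G.degree i : ℝ) := by
    rw [ABCMatrix_mulVec_sqrt_degree_apply, div_le_iff₀ (hw i), mul_assoc,
      Real.mul_self_sqrt (Nat.cast_nonneg _)]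
    exact G.sum_sqrt_degree_add_degree_sub_two_le hdeg hc i
  simpa [hx] using
    dotProduct_mulVec_le_of_mulVec_le (isSymm_ABCMatrix G) (ABCMatrix_nonneg G) hw hrow x
end
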